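/- Let (H,R,χ) be a pre-Cartier quasitriangular bialgebra. Then the infinitesimal quantum Yang–Baxter equation holds: R₁₂χ₁₂R₁₃R₂₃ + R₁₂R₁₃χ₁₃R₂₃ + R₁₂R₁₃R₂₃χ₂₃ = R₂₃χ₂₃R₁₃R₁₂ + R₂₃R₁₃χ₁₃R₁₂ + R₂₃R₁₃R₁₂χ₁₂. -/

import Mathlib

/-!
Apply `Δ ⊗ Id` to `Rχ`: the two hexagon axioms give
`(Δ ⊗ Id)(Rχ) = R₁₃R₂₃χ₂₃ + R₁₃χ₁₃R₂₃`, so the left-hand side is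
`R₁₂ (χ₁₂ (Δ ⊗ Id)(R) + (Δ ⊗ Id)(Rχ))`. Since `χ` commutes with `Δ`, `χ₁₂` commutes with the
image of `Δ ⊗ Id`; since `R Δ = Δᵒᵖ R`, moving `R₁₂` to the right turns `Δ ⊗ Id` into
`Δᵒᵖ ⊗ Id`, which swaps the first two legs of `R₁₃R₂₃` and of `R₁₃R₂₃χ₂₃ + R₁₃χ₁₃R₂₃`.
The result is the right-hand side.
-/

open scoped TensorProduct

noncomputable section

variable (k H : Type*) [CommRing k] [Ring H] [Bialgebra k H]

/-- leg embedding `a ⊗ b ↦ a ⊗ b ⊗ 1` into `H ⊗ (H ⊗ H)`. -/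
def leg12 : H ⊗[k] H →ₐ[k] H ⊗[k] (H ⊗[k] H) :=
  Algebra.TensorProduct.map (AlgHom.id k H) Algebra.TensorProduct.includeLeft

/-- leg embedding `a ⊗ b ↦ 1 ⊗ a ⊗ b`. -/
def leg23 : H ⊗[k] H →ₐ[k] H ⊗[k] (H ⊗[k] H) :=
  Algebra.TensorProduct.includeRight

/-- leg embedding `a ⊗ b ↦ a ⊗ 1 ⊗ b`. -/
def leg13 : H ⊗[k] H →ₐ[k] H ⊗[k] (H ⊗[k] H) :=
  Algebra.TensorProduct.map (AlgHom.id k H) Algebra.TensorProduct.includeRight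

/-- `(Id ⊗ Δ)` as an algebra map `H ⊗ H → H ⊗ (H ⊗ H)`. -/
def idComul : H ⊗[k] H →ₐ[k] H ⊗[k] (H ⊗[k] H) :=
  Algebra.TensorProduct.map (AlgHom.id k H) (Bialgebra.comulAlgHom k H)

/-- `(Δ ⊗ Id)` as an algebra map `H ⊗ H → H ⊗ (H ⊗ H)` (after reassociation). -/
def comulId : H ⊗[k] H →ₐ[k] H ⊗[k] (H ⊗[k] H) :=
  (Algebra.TensorProduct.assoc k k k H H H).toAlgHom.comp
    (Algebra.TensorProduct.map (Bialgebra.comulAlgHom k H) (AlgHom.id k H))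

/-- the flip `a ⊗ b ↦ b ⊗ a` as an algebra map. -/
def swapT : H ⊗[k] H →ₐ[k] H ⊗[k] H := (Algebra.TensorProduct.comm k H H).toAlgHom

/-- A quasitriangular structure on the bialgebra `H`. -/
structure QT where
  R : H ⊗[k] H
  Rinv : H ⊗[k] H
  mul_inv : R * Rinv = 1
  inv_mul : Rinv * R = 1
  quasi_cocomm : ∀ h : H, swapT k H (Coalgebra.comul (R := k) h) * R = R * Coalgebra.comul (R := k) h
  hex1 : idComul k H R = leg13 k H R * leg12 k H R
  hex2 : comulId k H R = leg13 k H R * leg23 k H R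

/-- A pre-Cartier quasitriangular bialgebra structure on `H`. -/
structure PreCartier extends QT k H where
  χ : H ⊗[k] H
  chi_comm : ∀ h : H, χ * Coalgebra.comul (R := k) h = Coalgebra.comul (R := k) h * χ
  chi_hex1 : idComul k H χ = leg12 k H χ + leg12 k H Rinv * leg13 k H χ * leg12 k H R
  chi_hex2 : comulId k H χ = leg23 k H χ + leg23 k H Rinv * leg13 k H χ * leg23 k H R

section LegMap

variable {A : Type*} [Ring A] [Algebra k A]

/-- `g ⊗ Id` on the first two legs; `legMap12 k (swapT k H) ∘ comulId k H` is `Δᵒᵖ ⊗ Id`. -/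
def legMap12 (g : A ⊗[k] A →ₐ[k] A ⊗[k] A) : A ⊗[k] (A ⊗[k] A) →ₐ[k] A ⊗[k] (A ⊗[k] A) :=
  (Algebra.TensorProduct.assoc k k k A A A).toAlgHom.comp
    ((Algebra.TensorProduct.map g (AlgHom.id k A)).comp
      (Algebra.TensorProduct.assoc k k k A A A).symm.toAlgHom)

lemma legMap12_assoc_tmul (g : A ⊗[k] A →ₐ[k] A ⊗[k] A) (x : A ⊗[k] A) (c : A) :
    legMap12 k g (Algebra.TensorProduct.assoc k k k A A A (x ⊗ₜ c)) =
      Algebra.TensorProduct.assoc k k k A A A (g x ⊗ₜ c) := by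
  simp [legMap12]

lemma legMap12_id : legMap12 k (AlgHom.id k (A ⊗[k] A)) = AlgHom.id k _ :=
  AlgHom.ext fun x => by simp [legMap12, Algebra.TensorProduct.map_id]

end LegMap

lemma assoc_tmul_eq_leg12_mul (x : H ⊗[k] H) (b : H) :
    Algebra.TensorProduct.assoc k k k H H H (x ⊗ₜ b) =
      leg12 k H x * ((1 : H) ⊗ₜ[k] ((1 : H) ⊗ₜ[k] b)) := by
  induction x using TensorProduct.induction_on with
  | zero => simp
  | tmul u v => simp [leg12, Algebra.TensorProduct.assoc_tmul, Algebra.TensorProduct.tmul_mul_tmul]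
  | add x y hx hy => rw [TensorProduct.add_tmul, map_add, hx, hy, map_add, add_mul]

lemma leg12_eq_assoc_tmul_one (x : H ⊗[k] H) :
    leg12 k H x = Algebra.TensorProduct.assoc k k k H H H (x ⊗ₜ 1) := by
  rw [assoc_tmul_eq_leg12_mul, ← Algebra.TensorProduct.one_def, ← Algebra.TensorProduct.one_def,
    mul_one]

lemma legMap12_leg12 (g : H ⊗[k] H →ₐ[k] H ⊗[k] H) (x : H ⊗[k] H) :
    legMap12 k g (leg12 k H x) = leg12 k H (g x) := by
  rw [leg12_eq_assoc_tmul_one, legMap12_assoc_tmul, leg12_eq_assoc_tmul_one]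

lemma legMap12_swapT_leg13 (x : H ⊗[k] H) : legMap12 k (swapT k H) (leg13 k H x) = leg23 k H x := by
  induction x using TensorProduct.induction_on with
  | zero => simp
  | tmul a b => simp [legMap12, leg13, leg23, swapT, Algebra.TensorProduct.assoc_symm_tmul]
  | add x y hx hy => simp [hx, hy]

lemma legMap12_swapT_leg23 (x : H ⊗[k] H) : legMap12 k (swapT k H) (leg23 k H x) = leg13 k H x := by
  induction x using TensorProduct.induction_on with
  | zero => simp
  | tmul a b => simp [legMap12, leg13, leg23, swapT, Algebra.TensorProduct.assoc_symm_tmul]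
  | add x y hx hy => simp [hx, hy]

lemma commute_leg12_one_tmul_one_tmul (x : H ⊗[k] H) (b : H) :
    Commute (leg12 k H x) ((1 : H) ⊗ₜ[k] ((1 : H) ⊗ₜ[k] b)) := by
  induction x using TensorProduct.induction_on with
  | zero => simp
  | tmul u v => simp [Commute, SemiconjBy, leg12, Algebra.TensorProduct.tmul_mul_tmul]
  | add x y hx hy => simpa using hx.add_left hy

lemma comulId_tmul (a b : H) :
    comulId k H (a ⊗ₜ b) =
      Algebra.TensorProduct.assoc k k k H H H (Coalgebra.comul (R := k) a ⊗ₜ b) := by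
  simp [comulId]

lemma leg12_mul_comulId_of_mul_comul (x : H ⊗[k] H) (g : H ⊗[k] H →ₐ[k] H ⊗[k] H)
    (hx : ∀ h : H, x * Coalgebra.comul (R := k) h = g (Coalgebra.comul (R := k) h) * x)
    (z : H ⊗[k] H) :
    leg12 k H x * comulId k H z = legMap12 k g (comulId k H z) * leg12 k H x := by
  induction z using TensorProduct.induction_on with
  | zero => simp
  | tmul a b =>
    rw [comulId_tmul, legMap12_assoc_tmul, assoc_tmul_eq_leg12_mul, assoc_tmul_eq_leg12_mul,
      ← mul_assoc, ← map_mul, hx, map_mul, mul_assoc, mul_assoc,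
      (commute_leg12_one_tmul_one_tmul k H x b).eq]
  | add z w hz hw => simp [mul_add, add_mul, hz, hw]

namespace QT

variable {k H} (Q : QT k H)

lemma leg12_R_mul_comulId (z : H ⊗[k] H) :
    leg12 k H Q.R * comulId k H z = legMap12 k (swapT k H) (comulId k H z) * leg12 k H Q.R :=
  leg12_mul_comulId_of_mul_comul k H Q.R (swapT k H) (fun h => (Q.quasi_cocomm h).symm) z

lemma legMap12_swapT_comulId_R :
    legMap12 k (swapT k H) (comulId k H Q.R) = leg23 k H Q.R * leg13 k H Q.R := by
  rw [Q.hex2, map_mul, legMap12_swapT_leg13, legMap12_swapT_leg23]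

end QT

namespace PreCartier

variable {k H} (P : PreCartier k H)

lemma leg12_chi_mul_comulId (z : H ⊗[k] H) :
    leg12 k H P.χ * comulId k H z = comulId k H z * leg12 k H P.χ := by
  simpa [legMap12_id] using
    leg12_mul_comulId_of_mul_comul k H P.χ (AlgHom.id k _) P.chi_comm z

lemma comulId_R_mul_chi :
    comulId k H (P.R * P.χ) =
      leg13 k H P.R * leg23 k H P.R * leg23 k H P.χ +
        leg13 k H P.R * leg13 k H P.χ * leg23 k H P.R := by
  have hR : leg23 k H P.R * leg23 k H P.Rinv = 1 := by rw [← map_mul, P.mul_inv, map_one]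
  rw [map_mul, P.hex2, P.chi_hex2, mul_add]
  congr 1
  calc leg13 k H P.R * leg23 k H P.R * (leg23 k H P.Rinv * leg13 k H P.χ * leg23 k H P.R)
      = leg13 k H P.R * (leg23 k H P.R * leg23 k H P.Rinv) * leg13 k H P.χ * leg23 k H P.R := by
        simp only [mul_assoc]
    _ = leg13 k H P.R * leg13 k H P.χ * leg23 k H P.R := by rw [hR, mul_one]

lemma legMap12_swapT_comulId_R_mul_chi :
    legMap12 k (swapT k H) (comulId k H (P.R * P.χ)) =
      leg23 k H P.R * leg13 k H P.R * leg13 k H P.χ +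
        leg23 k H P.R * leg23 k H P.χ * leg13 k H P.R := by
  rw [comulId_R_mul_chi]
  simp only [map_add, map_mul, legMap12_swapT_leg13, legMap12_swapT_leg23]

end PreCartier

/-- the infinitesimal quantum Yang–Baxter equation holds for every
pre-Cartier quasitriangular bialgebra `(H, R, χ)`. -/
theorem infinitesimal_QYB (P : PreCartier k H) :
    leg12 k H P.R * leg12 k H P.χ * leg13 k H P.R * leg23 k H P.R +
      leg12 k H P.R * leg13 k H P.R * leg13 k H P.χ * leg23 k H P.R +
      leg12 k H P.R * leg13 k H P.R * leg23 k H P.R * leg23 k H P.χ =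
    leg23 k H P.R * leg23 k H P.χ * leg13 k H P.R * leg12 k H P.R +
      leg23 k H P.R * leg13 k H P.R * leg13 k H P.χ * leg12 k H P.R +
      leg23 k H P.R * leg13 k H P.R * leg12 k H P.R * leg12 k H P.χ := by
  have lhs_eq : leg12 k H P.R * leg12 k H P.χ * leg13 k H P.R * leg23 k H P.R +
      leg12 k H P.R * leg13 k H P.R * leg13 k H P.χ * leg23 k H P.R +
      leg12 k H P.R * leg13 k H P.R * leg23 k H P.R * leg23 k H P.χ =
      leg12 k H P.R * comulId k H P.R * leg12 k H P.χ +
        leg12 k H P.R * comulId k H (P.R * P.χ) := by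
    rw [mul_assoc _ (comulId k H P.R), ← P.leg12_chi_mul_comulId, P.comulId_R_mul_chi, P.hex2]
    noncomm_ring
  rw [lhs_eq, P.leg12_R_mul_comulId, P.leg12_R_mul_comulId, P.legMap12_swapT_comulId_R,
    P.legMap12_swapT_comulId_R_mul_chi]
  noncomm_ring
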